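/- If S is a ∪-basis of a core compact space X, then the way-below relation ⋐ on S is distributive: whenever p ⋐ s ∪ t with p, s, t ∈ S, for every p' ∈ S with p' ⋐ p there exist s', t' ∈ S with s' ⋐ s, t' ⋐ t and p' ⊆ s' ∪ t' ⊆ p. -/

import Mathlib

variable {S : Type*} [SemilatticeSup S] [OrderBot S]

/-- A (nonempty) filter: an up-set in which any two elements have a common lower bound. -/
def IsFilt (F : Set S) : Prop :=
  F.Nonempty ∧ (∀ p ∈ F, ∀ q, p ≤ q → q ∈ F) ∧
    ∀ p ∈ F, ∀ q ∈ F, ∃ t ∈ F, t ≤ p ∧ t ≤ q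

/-- A filter is round if every member has a `r`-predecessor in the filter. -/
def IsRound (r : S → S → Prop) (F : Set S) : Prop :=
  ∀ p ∈ F, ∃ t ∈ F, r t p

/-- Primeness: `p ⊔ q ∈ P` implies `p ∈ P` or `q ∈ P`. -/
def IsPrimeFilt (P : Set S) : Prop :=
  ∀ p q, p ⊔ q ∈ P → p ∈ P ∨ q ∈ P

/-- The spectrum: proper round prime filters. -/
def Spec (r : S → S → Prop) : Type _ :=
  {P : Set S // IsFilt P ∧ IsRound r P ∧ IsPrimeFilt P ∧ ⊥ ∉ P}

/-- The basic open set `Ŝ_p`. -/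
def basicOpen (r : S → S → Prop) (p : S) : Set (Spec r) :=
  {P | p ∈ P.1}

instance specTop (r : S → S → Prop) : TopologicalSpace (Spec r) :=
  TopologicalSpace.generateFrom (Set.range (basicOpen r))

/-- Distributivity of `r`. -/
def IsDistrib (r : S → S → Prop) : Prop :=
  ∀ p s t, r p (s ⊔ t) → ∀ p', r p' p →
    ∃ s' t', r s' s ∧ r t' t ∧ p' ≤ s' ⊔ t' ∧ s' ⊔ t' ≤ p

/-- `r` is auxiliary. -/
def IsAux (r : S → S → Prop) : Prop :=
  (∀ p p' q' q, p ≤ p' → r p' q' → q' ≤ q → r p q) ∧ ∀ p q, r p q → p ≤ q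

/-- `r` is interpolative. -/
def IsInterp (r : S → S → Prop) : Prop :=
  ∀ p q, r p q → ∃ s, r p s ∧ r s q

/-- `r` is approximating: `≤` is the lower preorder of `r`. -/
def IsApprox (r : S → S → Prop) : Prop :=
  ∀ p q, p ≤ q ↔ ∀ t, r t p → r t q

/-- `r` is `∨`-preserving. -/
def IsSupPres (r : S → S → Prop) : Prop :=
  ∀ p p' q q', r p' p → r q' q → r (p' ⊔ q') (p ⊔ q)

/-- `S` with `r` is a `∨`-predomain. -/
def IsPredom (r : S → S → Prop) : Prop :=
  IsAux r ∧ IsApprox r ∧ IsInterp r ∧ IsSupPres r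

/-- Ideal: downward closed and closed under pairwise joins. -/
def IsIdl (I : Set S) : Prop :=
  (∀ p ∈ I, ∀ q, q ≤ p → q ∈ I) ∧ ∀ p ∈ I, ∀ q ∈ I, p ⊔ q ∈ I

/-- The way-below relation on subsets of a topological space:
every open cover of `q` has a finite subcover of `p`. -/
def WayBelow {X : Type*} [TopologicalSpace X] (p q : Set X) : Prop :=
  ∀ C : Set (Set X), (∀ U ∈ C, IsOpen U) → q ⊆ ⋃₀ C →
    ∃ F ⊆ C, F.Finite ∧ p ⊆ ⋃₀ F

/-- Core compactness. -/
def CoreCompact (X : Type*) [TopologicalSpace X] : Prop :=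
  ∀ (x : X) (U : Set X), IsOpen U → x ∈ U → ∃ V, IsOpen V ∧ x ∈ V ∧ WayBelow V U

/-- A `∪`-basis: a basis containing `∅` and closed under pairwise unions. -/
def IsUnionBasis {X : Type*} [TopologicalSpace X] (B : Set (Set X)) : Prop :=
  TopologicalSpace.IsTopologicalBasis B ∧ ∅ ∈ B ∧ ∀ p ∈ B, ∀ q ∈ B, p ∪ q ∈ B

/-! Cover `p` by basic opens that lie in `p` and are way below `s` or `t`; core compactness
makes this possible since `p ⊆ s ∪ t`. As `p' ⋐ p`, finitely many of them cover `p'`, and the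
unions `s'` and `t'` of those way below `s`, resp. `t`, are again basic opens way below `s`,
resp. `t`. -/

namespace WayBelow

variable {X : Type*} [TopologicalSpace X] {p p' q q' : Set X}

theorem mono (hp : p' ⊆ p) (h : WayBelow p q) (hq : q ⊆ q') : WayBelow p' q' :=
  fun C hC hcov => by
    obtain ⟨F, hFC, hF, hpF⟩ := h C hC (hq.trans hcov)
    exact ⟨F, hFC, hF, hp.trans hpF⟩

theorem subset (hq : IsOpen q) (h : WayBelow p q) : p ⊆ q := by
  obtain ⟨F, hFC, -, hpF⟩ := h {q} (by simpa) (by simp)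
  exact hpF.trans (Set.sUnion_subset_sUnion hFC |>.trans (by simp))

theorem sUnion_left {F : Set (Set X)} (hF : F.Finite) (h : ∀ V ∈ F, WayBelow V q) :
    WayBelow (⋃₀ F) q := fun C hC hcov => by
  choose! G hGC hG hVG using fun V hV => h V hV C hC hcov
  refine ⟨⋃ V ∈ F, G V, Set.iUnion₂_subset hGC, hF.biUnion hG,
    Set.sUnion_subset fun V hV => ?_⟩
  exact (hVG V hV).trans (Set.sUnion_subset_sUnion (Set.subset_biUnion_of_mem hV))

end WayBelow

theorem CoreCompact.exists_mem_basis_wayBelow {X : Type*} [TopologicalSpace X]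
    (hcc : CoreCompact X) {B : Set (Set X)} (hB : TopologicalSpace.IsTopologicalBasis B)
    {U : Set X} (hU : IsOpen U) {x : X} (hx : x ∈ U) : ∃ V ∈ B, x ∈ V ∧ WayBelow V U := by
  obtain ⟨W, hW, hxW, hWU⟩ := hcc x U hU hx
  obtain ⟨V, hVB, hxV, hVW⟩ := hB.exists_subset_of_mem_open hxW hW
  exact ⟨V, hVB, hxV, hWU.mono hVW subset_rfl⟩

theorem CoreCompact.exists_mem_basis_subset_wayBelow {X : Type*} [TopologicalSpace X]
    (hcc : CoreCompact X) {B : Set (Set X)} (hB : TopologicalSpace.IsTopologicalBasis B)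
    {p q : Set X} (hp : IsOpen p) (hq : IsOpen q) {x : X} (hx : x ∈ q ∩ p) :
    ∃ U ∈ B, x ∈ U ∧ U ⊆ p ∧ WayBelow U q := by
  obtain ⟨U, hUB, hxU, hU⟩ := hcc.exists_mem_basis_wayBelow hB (hq.inter hp) hx
  exact ⟨U, hUB, hxU, (hU.subset (hq.inter hp)).trans Set.inter_subset_right,
    hU.mono subset_rfl Set.inter_subset_left⟩

theorem Set.sUnion_subset_sUnion_sep_union {α : Type*} {F : Set (Set α)} {P Q : Set α → Prop}
    (h : ∀ U ∈ F, P U ∨ Q U) : ⋃₀ F ⊆ ⋃₀ {U ∈ F | P U} ∪ ⋃₀ {U ∈ F | Q U} := by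
  rintro x ⟨U, hU, hx⟩
  rcases h U hU with hP | hQ
  · exact .inl ⟨U, ⟨hU, hP⟩, hx⟩
  · exact .inr ⟨U, ⟨hU, hQ⟩, hx⟩

theorem IsUnionBasis.sUnion_mem {X : Type*} [TopologicalSpace X] {B : Set (Set X)}
    (hB : IsUnionBasis B) {F : Set (Set X)} (hF : F.Finite) (hFB : F ⊆ B) : ⋃₀ F ∈ B :=
  SupClosed.sSup_mem (fun _ hU _ hV => hB.2.2 _ hU _ hV) hF hB.2.1 hFB

theorem stmt6 {X : Type*} [TopologicalSpace X] (hcc : CoreCompact X)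
    (B : Set (Set X)) (hB : IsUnionBasis B) (p s t : Set X)
    (hp : p ∈ B) (hs : s ∈ B) (ht : t ∈ B) (h : WayBelow p (s ∪ t)) :
    ∀ p' ∈ B, WayBelow p' p → ∃ s' ∈ B, ∃ t' ∈ B,
      WayBelow s' s ∧ WayBelow t' t ∧ p' ⊆ s' ∪ t' ∧ s' ∪ t' ⊆ p := by
  intro p' _ hp'p
  have hopen : ∀ U ∈ B, IsOpen U := fun U hU => hB.1.isOpen hU
  set C := {U ∈ B | U ⊆ p ∧ (WayBelow U s ∨ WayBelow U t)}
  have hcover : p ⊆ ⋃₀ C := fun x hx => by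
    rcases h.subset ((hopen s hs).union (hopen t ht)) hx with hxs | hxt
    · obtain ⟨U, hUB, hxU, hUp, hUs⟩ :=
        hcc.exists_mem_basis_subset_wayBelow hB.1 (hopen p hp) (hopen s hs) ⟨hxs, hx⟩
      exact ⟨U, ⟨hUB, hUp, .inl hUs⟩, hxU⟩
    · obtain ⟨U, hUB, hxU, hUp, hUt⟩ :=
        hcc.exists_mem_basis_subset_wayBelow hB.1 (hopen p hp) (hopen t ht) ⟨hxt, hx⟩
      exact ⟨U, ⟨hUB, hUp, .inr hUt⟩, hxU⟩
  obtain ⟨F, hFC, hF, hp'F⟩ := hp'p C (fun U hU => hopen U hU.1) hcover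
  have hFs : {U ∈ F | WayBelow U s}.Finite := hF.subset (Set.sep_subset _ _)
  have hFt : {U ∈ F | WayBelow U t}.Finite := hF.subset (Set.sep_subset _ _)
  refine ⟨_, hB.sUnion_mem hFs fun U hU => (hFC hU.1).1,
    _, hB.sUnion_mem hFt fun U hU => (hFC hU.1).1,
    WayBelow.sUnion_left hFs fun U hU => hU.2, WayBelow.sUnion_left hFt fun U hU => hU.2,
    hp'F.trans (Set.sUnion_subset_sUnion_sep_union fun U hU => (hFC hU).2.2), ?_⟩
  exact Set.union_subset (Set.sUnion_subset fun U hU => (hFC hU.1).2.1)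
    (Set.sUnion_subset fun U hU => (hFC hU.1).2.1)
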